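/- arXiv:2302.04624 — 4 statements merged into one kernel-verified Lean document; each statement's English description precedes it below -/
import Mathlib

section
/- For every graph G, the tree-width of G satisfies tw(G) ≤ 5·ecrw(G) − 1. -/
open SimpleGraph

universe u

/-- A tree-cut decomposition of a graph `G`: a finite tree `T` together with
pairwise disjoint (possibly empty) bags covering the vertex set of `G`. -/
structure TreeCutDecomp {V : Type u} (G : SimpleGraph V) where
  β : Type
  fintypeβ : Fintype β
  T : SimpleGraph β
  isTree : T.IsTree
  bag : β → Set V
  disj : Pairwise fun s t => Disjoint (bag s) (bag t)
  covers : ∀ v : V, ∃ t, v ∈ bag t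

namespace TreeCutDecomp

variable {V : Type u} {G : SimpleGraph V}

/-- The edge `e` of `G` crosses the bag at node `t`: its endpoints lie in bag-unions of
two distinct components of `T - t`. -/
def Crosses (D : TreeCutDecomp G) (t : D.β) (e : Sym2 V) : Prop :=
  e ∈ G.edgeSet ∧ ∃ (u v : V) (s₁ s₂ : D.β) (h₁ : s₁ ≠ t) (h₂ : s₂ ≠ t),
    e = s(u, v) ∧ u ∈ D.bag s₁ ∧ v ∈ D.bag s₂ ∧
    ¬ (D.T.induce {x | x ≠ t}).Reachable ⟨s₁, h₁⟩ ⟨s₂, h₂⟩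

/-- The number of edges crossing the bag at node `t`. -/
noncomputable def crossNum (D : TreeCutDecomp G) (t : D.β) : ℕ :=
  {e : Sym2 V | D.Crosses t e}.ncard

/-- The crossing number of the decomposition is at most `k`. -/
def CrossLE (D : TreeCutDecomp G) (k : ℕ) : Prop := ∀ t, D.crossNum t ≤ k

/-- The thickness (maximum bag size) of the decomposition is at most `a`. -/
def ThickLE (D : TreeCutDecomp G) (a : ℕ) : Prop := ∀ t, (D.bag t).ncard ≤ a

end TreeCutDecomp

/-- The `α`-edge-crossing width: minimum crossing number over tree-cut decompositions
of thickness at most `α`. -/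
noncomputable def ecrwA {V : Type u} (G : SimpleGraph V) (a : ℕ) : ℕ :=
  sInf {k | ∃ D : TreeCutDecomp G, D.ThickLE a ∧ D.CrossLE k}

/-- The edge-crossing width: minimum over tree-cut decompositions of the maximum of the
thickness and the crossing number. -/
noncomputable def ecrw {V : Type u} (G : SimpleGraph V) : ℕ :=
  sInf {k | ∃ D : TreeCutDecomp G, D.ThickLE k ∧ D.CrossLE k}

/-- A tree-decomposition of a graph `G`. -/
structure TreeDecomp {V : Type u} (G : SimpleGraph V) where
  β : Type
  fintypeβ : Fintype β
  T : SimpleGraph β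
  isTree : T.IsTree
  bag : β → Set V
  covers : ∀ v : V, ∃ t, v ∈ bag t
  coversEdge : ∀ u v : V, G.Adj u v → ∃ t, u ∈ bag t ∧ v ∈ bag t
  connBag : ∀ v : V, (T.induce {t | v ∈ bag t}).Connected

/-- The tree-width of `G`: minimum over tree-decompositions of (max bag size − 1). -/
noncomputable def treewidth {V : Type u} (G : SimpleGraph V) : ℕ :=
  sInf {w | ∃ D : TreeDecomp G, ∀ t, (D.bag t).ncard ≤ w + 1}

/-! Root the tree of a tree-cut decomposition of thickness and crossing number at most `k`, and
enlarge the bag at each node `t` by the bag of its parent and by the endpoints of the edges crossing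
`t`. An edge between adjacent nodes is covered at the child, and an edge between non-adjacent nodes
crosses every interior node of the tree path joining them; this both covers the edge and keeps the
nodes whose new bag holds a given vertex connected. The new bags have at most `k + k + 2k = 4k`
vertices, and `4k ≤ (5k - 1) + 1` also when `k = 0`. -/

lemma Sym2.ncard_setOf_exists_mem_le {α : Type*} [Finite α] (S : Set (Sym2 α)) :
    {v | ∃ e ∈ S, v ∈ e}.ncard ≤ 2 * S.ncard := by
  let fst : Sym2 α → α := fun e ↦ e.out.1
  let snd : Sym2 α → α := fun e ↦ e.out.2
  have hsub : {v | ∃ e ∈ S, v ∈ e} ⊆ fst '' S ∪ snd '' S := by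
    rintro v ⟨e, he, hv⟩
    rw [← Quot.out_eq e] at hv
    rcases Sym2.mem_iff.mp hv with rfl | rfl
    · exact .inl ⟨e, he, rfl⟩
    · exact .inr ⟨e, he, rfl⟩
  calc _ ≤ (fst '' S ∪ snd '' S).ncard := Set.ncard_le_ncard hsub
    _ ≤ S.ncard + S.ncard := (Set.ncard_union_le _ _).trans
        (add_le_add (Set.ncard_image_le S.toFinite) (Set.ncard_image_le S.toFinite))
    _ = 2 * S.ncard := (two_mul _).symm

namespace SimpleGraph

variable {V : Type*} {G : SimpleGraph V}

lemma Walk.reachable_induce_of_support_subset {s : Set V} {u v : V} (p : G.Walk u v)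
    (hp : ∀ x ∈ p.support, x ∈ s) (hu : u ∈ s) (hv : v ∈ s) :
    (G.induce s).Reachable ⟨u, hu⟩ ⟨v, hv⟩ :=
  (p.connected_induce_support.preconnected ⟨u, p.start_mem_support⟩
    ⟨v, p.end_mem_support⟩).map (induceHomOfLE G hp).toHom

lemma induce_connected_of_walks {s : Set V} {c : V} (hc : c ∈ s)
    (h : ∀ v ∈ s, ∃ p : G.Walk c v, ∀ x ∈ p.support, x ∈ s) : (G.induce s).Connected :=
  induce_connected_of_patches c hc fun hv ↦
    let ⟨p, hp⟩ := h _ hv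
    ⟨_, hp, p.start_mem_support, p.end_mem_support,
      p.connected_induce_support.preconnected _ _⟩

lemma IsAcyclic.reachable_induce_ne_iff (hG : G.IsAcyclic) {a b t : V} (p : G.Path a b)
    (ha : a ≠ t) (hb : b ≠ t) :
    (G.induce {x | x ≠ t}).Reachable ⟨a, ha⟩ ⟨b, hb⟩ ↔ t ∉ p.1.support := by
  classical
  refine ⟨fun ⟨w⟩ ht ↦ ?_, fun ht ↦ p.1.reachable_induce_of_support_subset
    (fun x hx (hxt : x = t) ↦ ht (hxt ▸ hx)) ha hb⟩
  have hw : t ∉ (w.map (Embedding.induce {x | x ≠ t}).toHom).support := by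
    rw [Walk.support_map, List.mem_map]
    exact fun ⟨x, _, hx⟩ ↦ x.2 hx
  rw [(hG.subsingleton_path a b).elim p (w.map (Embedding.induce {x | x ≠ t}).toHom).toPath] at ht
  exact hw (Walk.support_toPath_subset_support _ ht)

theorem IsTree.exists_parent (hG : G.IsTree) :
    ∃ f : V → V, (∀ t, f t = t ∨ G.Adj t (f t)) ∧
      ∀ s s', G.Adj s s' → f s = s' ∨ f s' = s := by
  classical
  obtain ⟨r⟩ := hG.connected.nonempty
  let path (t : V) : G.Path t r := (hG.connected t r).some.toPath
  refine ⟨fun t ↦ (path t).1.snd, fun t ↦ ?_, fun s s' h ↦ ?_⟩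
  · by_cases hnil : (path t).1.Nil
    · exact .inl (((path t).1.getVert_of_length_le
        (by simp [Walk.length_eq_zero_iff.mpr hnil])).trans hnil.eq.symm)
    · exact .inr (Walk.adj_snd hnil)
  · by_cases hs : s ∈ (path s').1.support
    · right
      have hedge : (path s').1.takeUntil s hs = h.symm.toWalk :=
        congrArg Subtype.val ((hG.isAcyclic.subsingleton_path s' s).elim
          ⟨_, (path s').2.takeUntil hs⟩ ⟨_, Walk.IsPath.of_adj h.symm⟩)
      change (path s').1.snd = s
      rw [← Walk.snd_takeUntil h.ne _ hs, hedge]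
      rfl
    · left
      have : path s = ⟨.cons h (path s').1, (path s').2.cons hs⟩ :=
        (hG.isAcyclic.subsingleton_path s r).elim _ _
      simp [this]

end SimpleGraph

namespace TreeCutDecomp

variable {V : Type u} {G : SimpleGraph V} (D : TreeCutDecomp G)

noncomputable def node (v : V) : D.β := (D.covers v).choose

lemma mem_bag_node (v : V) : v ∈ D.bag (D.node v) := (D.covers v).choose_spec

lemma node_eq_of_mem_bag {v : V} {t : D.β} (h : v ∈ D.bag t) : D.node v = t := by
  by_contra hne
  exact Set.disjoint_left.mp (D.disj hne) (D.mem_bag_node v) h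

def crossVerts (t : D.β) : Set V := {v | ∃ e, D.Crosses t e ∧ v ∈ e}

lemma ncard_crossVerts_le [Finite V] (t : D.β) : (D.crossVerts t).ncard ≤ 2 * D.crossNum t :=
  Sym2.ncard_setOf_exists_mem_le _

lemma crosses_of_mem_support {x y : V} {s₁ s₂ t : D.β} (hxy : G.Adj x y) (hx : x ∈ D.bag s₁)
    (hy : y ∈ D.bag s₂) (p : D.T.Path s₁ s₂) (ht : t ∈ p.1.support) (h₁ : s₁ ≠ t)
    (h₂ : s₂ ≠ t) : D.Crosses t s(x, y) :=
  ⟨hxy, x, y, s₁, s₂, h₁, h₂, rfl, hx, hy,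
    (D.isTree.isAcyclic.reachable_induce_ne_iff p h₁ h₂).not_left.mpr ht⟩

lemma exists_path_of_mem_crossVerts {v : V} {t : D.β} (hv : v ∈ D.crossVerts t) :
    ∃ (y : V) (s : D.β) (p : D.T.Path (D.node v) s), G.Adj v y ∧ y ∈ D.bag s ∧
      D.node v ≠ t ∧ s ≠ t ∧ t ∈ p.1.support := by
  classical
  obtain ⟨_, ⟨hE, x, y, s₁, s₂, h₁, h₂, rfl, hx, hy, hnr⟩, hv⟩ := hv
  have hxy : G.Adj x y := hE
  rcases Sym2.mem_iff.mp hv with rfl | rfl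
  · obtain rfl := D.node_eq_of_mem_bag hx
    let p := (D.isTree.connected (D.node v) s₂).some.toPath
    exact ⟨y, s₂, p, hxy, hy, h₁, h₂,
      (D.isTree.isAcyclic.reachable_induce_ne_iff p h₁ h₂).not_left.mp hnr⟩
  · obtain rfl := D.node_eq_of_mem_bag hy
    let p := (D.isTree.connected (D.node v) s₁).some.toPath
    exact ⟨x, s₁, p, hxy.symm, hx, h₂, h₁,
      (D.isTree.isAcyclic.reachable_induce_ne_iff p h₂ h₁).not_left.mp (hnr ∘ .symm)⟩

lemma exists_walk_of_mem_crossVerts {v : V} {t : D.β} (hv : v ∈ D.crossVerts t) :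
    ∃ q : D.T.Walk (D.node v) t, ∀ z ∈ q.support, z = D.node v ∨ v ∈ D.crossVerts z := by
  classical
  obtain ⟨y, s, p, hvy, hy, h₁, h₂, ht⟩ := D.exists_path_of_mem_crossVerts hv
  refine ⟨p.1.takeUntil t ht, fun z hz ↦ or_iff_not_imp_left.mpr fun hzv ↦ ?_⟩
  have hzs : s ≠ z := fun h ↦ Walk.endpoint_notMem_support_takeUntil p.2 ht h₂ (h ▸ hz)
  exact ⟨_, D.crosses_of_mem_support hvy (D.mem_bag_node v) hy p
    (p.1.support_takeUntil_subset_support ht hz) (Ne.symm hzv) hzs, Sym2.mem_mk_left v y⟩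

section Widening

variable (f : D.β → D.β)

def widenedBag (t : D.β) : Set V := D.bag t ∪ D.bag (f t) ∪ D.crossVerts t

lemma ncard_widenedBag_le [Finite V] {k : ℕ} (hthick : D.ThickLE k) (hcross : D.CrossLE k)
    (t : D.β) : (D.widenedBag f t).ncard ≤ 4 * k :=
  calc (D.widenedBag f t).ncard
      ≤ (D.bag t).ncard + (D.bag (f t)).ncard + (D.crossVerts t).ncard :=
        (Set.ncard_union_le _ _).trans (Nat.add_le_add_right (Set.ncard_union_le _ _) _)
    _ ≤ k + k + 2 * k :=
        Nat.add_le_add (Nat.add_le_add (hthick t) (hthick (f t)))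
          ((D.ncard_crossVerts_le t).trans (Nat.mul_le_mul_left 2 (hcross t)))
    _ = 4 * k := by ring

lemma exists_mem_widenedBag_of_adj (horient : ∀ s s', D.T.Adj s s' → f s = s' ∨ f s' = s)
    {u v : V} (huv : G.Adj u v) : ∃ t, u ∈ D.widenedBag f t ∧ v ∈ D.widenedBag f t := by
  classical
  by_cases heq : D.node u = D.node v
  · exact ⟨D.node u, .inl (.inl (D.mem_bag_node u)), .inl (.inl (heq ▸ D.mem_bag_node v))⟩
  by_cases hadj : D.T.Adj (D.node u) (D.node v)
  · rcases horient _ _ hadj with h | h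
    · exact ⟨D.node u, .inl (.inl (D.mem_bag_node u)), .inl (.inr (h ▸ D.mem_bag_node v))⟩
    · exact ⟨D.node v, .inl (.inr (h ▸ D.mem_bag_node u)), .inl (.inl (D.mem_bag_node v))⟩
  let p := (D.isTree.connected (D.node u) (D.node v)).some.toPath
  have hnil : ¬ p.1.Nil := fun h ↦ heq h.eq
  have hsnd := p.1.adj_snd hnil
  have hcross := D.crosses_of_mem_support huv (D.mem_bag_node u) (D.mem_bag_node v) p
    (List.mem_of_mem_tail (Walk.snd_mem_tail_support hnil)) hsnd.ne
    (fun h ↦ hadj (by rwa [h]))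
  exact ⟨p.1.snd, .inr ⟨_, hcross, Sym2.mem_mk_left u v⟩,
    .inr ⟨_, hcross, Sym2.mem_mk_right u v⟩⟩

lemma induce_widenedBag_connected (hparent : ∀ t, f t = t ∨ D.T.Adj t (f t)) (v : V) :
    (D.T.induce {t | v ∈ D.widenedBag f t}).Connected := by
  have hnode : v ∈ D.widenedBag f (D.node v) := .inl (.inl (D.mem_bag_node v))
  refine induce_connected_of_walks hnode fun t ht ↦ ?_
  rcases ht with (ht | ht) | ht
  · obtain rfl := D.node_eq_of_mem_bag ht
    exact ⟨.nil, by simpa using hnode⟩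
  · have hft := D.node_eq_of_mem_bag ht
    rcases hparent t with h | h
    · obtain rfl : D.node v = t := h ▸ hft
      exact ⟨.nil, by simpa using hnode⟩
    · refine ⟨.cons (hft ▸ h.symm) .nil, ?_⟩
      simp only [Walk.support_cons, Walk.support_nil, List.mem_cons, List.not_mem_nil, or_false]
      rintro z (rfl | rfl)
      · exact hnode
      · exact .inl (.inr ht)
  · obtain ⟨q, hq⟩ := D.exists_walk_of_mem_crossVerts ht
    exact ⟨q, fun z hz ↦ (hq z hz).elim (fun h ↦ h ▸ hnode) .inr⟩

def toTreeDecomp (hparent : ∀ t, f t = t ∨ D.T.Adj t (f t))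
    (horient : ∀ s s', D.T.Adj s s' → f s = s' ∨ f s' = s) : TreeDecomp G where
  β := D.β
  fintypeβ := D.fintypeβ
  T := D.T
  isTree := D.isTree
  bag := D.widenedBag f
  covers v := ⟨D.node v, .inl (.inl (D.mem_bag_node v))⟩
  coversEdge _ _ := D.exists_mem_widenedBag_of_adj f horient
  connBag := D.induce_widenedBag_connected f hparent

end Widening

def single (G : SimpleGraph V) : TreeCutDecomp G where
  β := Unit
  fintypeβ := inferInstance
  T := ⊥
  isTree := .of_subsingleton
  bag _ := Set.univ
  disj := Subsingleton.pairwise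
  covers _ := ⟨(), trivial⟩

lemma single_thickLE [Finite V] : (single G).ThickLE (Nat.card V) := fun _ ↦ (Set.ncard_univ V).le

lemma single_crossLE (k : ℕ) : (single G).CrossLE k := by
  intro t
  have : {e | (single G).Crosses t e} = ∅ :=
    Set.eq_empty_of_forall_notMem fun _ ⟨_, _, _, s, _, hs, _⟩ ↦
      hs (Subsingleton.elim (α := Unit) s t)
  simp [crossNum, this]

end TreeCutDecomp

lemma exists_thickLE_crossLE_ecrw {V : Type u} [Finite V] (G : SimpleGraph V) :
    ∃ D : TreeCutDecomp G, D.ThickLE (ecrw G) ∧ D.CrossLE (ecrw G) :=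
  Nat.sInf_mem (s := {k | ∃ D : TreeCutDecomp G, D.ThickLE k ∧ D.CrossLE k})
    ⟨Nat.card V, .single G, TreeCutDecomp.single_thickLE, TreeCutDecomp.single_crossLE _⟩

/-- For every graph `G`, `tw(G) ≤ 5·ecrw(G) − 1`. -/
theorem stmt_2 {V : Type u} [Fintype V] (G : SimpleGraph V) :
    treewidth G ≤ 5 * ecrw G - 1 := by
  obtain ⟨D, hthick, hcross⟩ := exists_thickLE_crossLE_ecrw G
  obtain ⟨f, hparent, horient⟩ := D.isTree.exists_parent
  refine Nat.sInf_le ⟨D.toTreeDecomp f hparent horient, fun t ↦ ?_⟩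
  exact (D.ncard_widenedBag_le f hthick hcross t).trans (by omega)
end

section
/- For all positive integers n and k with n ≥ 3, the graph S_{3,n} (the star K_{1,n} with each edge replaced by 3 internally vertex-disjoint paths of length 2) has 1-edge-crossing width at most 2. -/
open SimpleGraph

universe u

/-- The graph `S_{k,n}`: the star `K_{1,n}` with each edge replaced by `k` internally
vertex-disjoint paths of length 2. `Sum.inl ()` is the center `u_0`,
`Sum.inr (Sum.inl i)` is `u_i` (`i ∈ [n]`), and `Sum.inr (Sum.inr (i, j))` is `v_{i,j}`,
adjacent to `u_0` and `u_i`. -/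
def starSubdiv (k n : ℕ) : SimpleGraph (Unit ⊕ (Fin n ⊕ (Fin n × Fin k))) :=
  SimpleGraph.fromRel fun x y =>
    match x, y with
    | Sum.inl _, Sum.inr (Sum.inr _) => True
    | Sum.inr (Sum.inl i), Sum.inr (Sum.inr (a, _)) => i = a
    | _, _ => False

/-!
Take every vertex as its own bag and use the tree rooted at `u₀` whose branches are the paths
`u₀ - v i 0 - u i - v i 1 - v i 2`. Every edge of `S_{3,n}` joins a vertex to one of its ancestors
in this tree, so it crosses a node `t` only if `t` lies strictly between its endpoints. That leaves
the edges `u₀ v i 1`, `u₀ v i 2` at `u i` and at `v i 0`, the edges `u₀ v i 2`, `u i v i 2` at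
`v i 1`, and nothing elsewhere.
-/

open Relation

namespace TreeCutDecomp

variable {V : Type} [Fintype V] {G T : SimpleGraph V}

variable (G) in
def ofTree (hT : T.IsTree) : TreeCutDecomp G where
  β := V
  fintypeβ := inferInstance
  T := T
  isTree := hT
  bag t := {t}
  disj _ _ hst := Set.disjoint_singleton.mpr hst
  covers v := ⟨v, rfl⟩

lemma thickLE_ofTree (hT : T.IsTree) : (ofTree G hT).ThickLE 1 := fun t =>
  (Set.ncard_singleton t).le

lemma ofTree_crosses_iff (hT : T.IsTree) {t : V} {e : Sym2 V} :
    (ofTree G hT).Crosses t e ↔ ∃ x y, e = s(x, y) ∧ G.Adj x y ∧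
      ∃ (hx : x ≠ t) (hy : y ≠ t),
        ¬ (T.induce {z | z ≠ t}).Reachable ⟨x, hx⟩ ⟨y, hy⟩ := by
  constructor
  · rintro ⟨he, x, y, _, _, hx, hy, rfl, rfl, rfl, hr⟩
    exact ⟨x, y, rfl, he, hx, hy, hr⟩
  · rintro ⟨x, y, rfl, hxy, hx, hy, hr⟩
    exact ⟨hxy, x, y, x, y, hx, hy, rfl, rfl, rfl, hr⟩

end TreeCutDecomp

namespace SimpleGraph

lemma Reachable.mem_iff_of_adj_mem_iff {V : Type*} {G : SimpleGraph V} {S : Set V}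
    (hS : ∀ a b, G.Adj a b → (a ∈ S ↔ b ∈ S)) {x y : V} (h : G.Reachable x y) :
    x ∈ S ↔ y ∈ S := by
  rw [reachable_iff_reflTransGen] at h
  induction h with
  | refl => rfl
  | tail _ hab ih => exact ih.trans (hS _ _ hab)

variable {β : Type*} (r : β) (parent : β → β)

/-- `ReflTransGen (ParentStep r parent) x a` says that `a` is an ancestor of `x` (or `x` itself)
in the tree rooted at `r`. -/
def ParentStep (x y : β) : Prop := x ≠ r ∧ parent x = y

def parentGraph : SimpleGraph β := fromRel (ParentStep r parent)

variable {r parent}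

lemma reflTransGen_parentStep_root_iff {a : β} :
    ReflTransGen (ParentStep r parent) r a ↔ a = r := by
  rw [ReflTransGen.cases_head_iff]
  simp [ParentStep, eq_comm]

lemma reflTransGen_parentStep_iff_of_ne {x a : β} (hx : x ≠ r) :
    ReflTransGen (ParentStep r parent) x a ↔
      a = x ∨ ReflTransGen (ParentStep r parent) (parent x) a := by
  rw [ReflTransGen.cases_head_iff]
  simp [ParentStep, hx, eq_comm]

section rank

variable {rank : β → ℕ} (hrank : ∀ x, x ≠ r → rank (parent x) < rank x)
include hrank

lemma parent_ne_self_of_rank {x : β} (hx : x ≠ r) : parent x ≠ x :=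
  fun h => (hrank x hx).ne (by rw [h])

lemma parentGraph_adj_parent {x : β} (hx : x ≠ r) : (parentGraph r parent).Adj x (parent x) :=
  (fromRel_adj _ _ _).2 ⟨(parent_ne_self_of_rank hrank hx).symm, .inl ⟨hx, rfl⟩⟩

lemma rank_le_of_reflTransGen {x a : β} (h : ReflTransGen (ParentStep r parent) x a) :
    rank a ≤ rank x := by
  induction h with
  | refl => rfl
  | tail _ hstep ih => obtain ⟨hb, rfl⟩ := hstep; exact (hrank _ hb).le.trans ih

lemma reflTransGen_parentStep_root (x : β) : ReflTransGen (ParentStep r parent) x r := by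
  induction hx : rank x using Nat.strong_induction_on generalizing x with
  | _ k ih =>
    by_cases hxr : x = r
    · rw [hxr]
    · exact .head ⟨hxr, rfl⟩ (ih _ (hx ▸ hrank x hxr) _ rfl)

lemma reachable_of_reflTransGen {x a : β} (h : ReflTransGen (ParentStep r parent) x a) :
    (parentGraph r parent).Reachable x a := by
  induction h with
  | refl => rfl
  | tail _ hstep ih =>
    obtain ⟨hb, rfl⟩ := hstep
    exact ih.trans (parentGraph_adj_parent hrank hb).reachable

lemma parentGraph_connected : (parentGraph r parent).Connected :=
  (connected_iff _).2
    ⟨fun x y => (reachable_of_reflTransGen hrank (reflTransGen_parentStep_root hrank x)).trans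
      (reachable_of_reflTransGen hrank (reflTransGen_parentStep_root hrank y)).symm, ⟨r⟩⟩

/-- The descendants of `x` are closed under every edge except `s(x, parent x)`. -/
lemma parentGraph_isBridge {x : β} (hx : x ≠ r) :
    (parentGraph r parent).IsBridge s(x, parent x) := by
  set S := {y | ReflTransGen (ParentStep r parent) y x}
  have hstep : ∀ a b, ParentStep r parent a b → s(a, b) ≠ s(x, parent x) →
      (a ∈ S ↔ b ∈ S) := by
    rintro a _ ⟨ha, rfl⟩ hne
    refine ⟨fun haS => ?_, fun hbS => .head ⟨ha, rfl⟩ hbS⟩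
    rcases ReflTransGen.cases_head haS with rfl | ⟨_, ⟨-, rfl⟩, hb⟩
    · exact absurd rfl hne
    · exact hb
  have hS : ∀ a b, ((parentGraph r parent).deleteEdges {s(x, parent x)}).Adj a b →
      (a ∈ S ↔ b ∈ S) := by
    intro a b hab
    simp only [deleteEdges_adj, Set.mem_singleton_iff, parentGraph, fromRel_adj] at hab
    obtain ⟨⟨-, hab | hba⟩, hne⟩ := hab
    · exact hstep a b hab hne
    · exact (hstep b a hba (Sym2.eq_swap (a := b) ▸ hne)).symm
  have hpx : parent x ∉ S := fun h => (hrank x hx).not_ge (rank_le_of_reflTransGen hrank h)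
  exact fun hr => hpx ((Reachable.mem_iff_of_adj_mem_iff hS hr).1 ReflTransGen.refl)

lemma isTree_parentGraph : (parentGraph r parent).IsTree := by
  refine ⟨parentGraph_connected hrank, isAcyclic_iff_forall_adj_isBridge.2 fun a b hab => ?_⟩
  obtain ⟨-, ⟨ha, rfl⟩ | ⟨hb, rfl⟩⟩ := (fromRel_adj _ _ _).1 hab
  · exact parentGraph_isBridge hrank ha
  · exact Sym2.eq_swap ▸ parentGraph_isBridge hrank hb

lemma reachable_induce_of_reflTransGen {x a t : β} (h : ReflTransGen (ParentStep r parent) x a)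
    (hx : x ≠ t) (ha : a ≠ t)
    (hbetween : ¬ (ReflTransGen (ParentStep r parent) x t ∧
      ReflTransGen (ParentStep r parent) t a)) :
    ((parentGraph r parent).induce {z | z ≠ t}).Reachable ⟨x, hx⟩ ⟨a, ha⟩ := by
  induction h using ReflTransGen.head_induction_on with
  | refl => rfl
  | head hstep hrest ih =>
    obtain ⟨hxr, rfl⟩ := hstep
    have hpx : parent _ ≠ t := fun hpt => hbetween ⟨.single ⟨hxr, hpt⟩, hpt ▸ hrest⟩
    have hadj : ((parentGraph r parent).induce {z | z ≠ t}).Adj ⟨_, hx⟩ ⟨_, hpx⟩ :=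
      parentGraph_adj_parent hrank hxr
    exact hadj.reachable.trans
      (ih hpx fun ⟨hpt, hta⟩ => hbetween ⟨.head ⟨hxr, rfl⟩ hpt, hta⟩)

end rank

end SimpleGraph

namespace TreeCutDecomp

open SimpleGraph

variable {V : Type} [Fintype V] {G : SimpleGraph V}

lemma ecrwA_one_le_of_isTree {T : SimpleGraph V} (hT : T.IsTree) {k : ℕ}
    (h : ∀ t, (ofTree G hT).crossNum t ≤ k) : ecrwA G 1 ≤ k :=
  Nat.sInf_le ⟨_, thickLE_ofTree hT, h⟩

lemma crosses_ofTree_parentGraph {r : V} {parent : V → V} {rank : V → ℕ}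
    (hrank : ∀ x, x ≠ r → rank (parent x) < rank x)
    (hG : ∀ x a, G.Adj x a →
      ReflTransGen (ParentStep r parent) x a ∨ ReflTransGen (ParentStep r parent) a x)
    {t : V} {e : Sym2 V} (h : (ofTree G (isTree_parentGraph hrank)).Crosses t e) :
    ∃ x a, e = s(x, a) ∧ G.Adj x a ∧ x ≠ t ∧ a ≠ t ∧
      ReflTransGen (ParentStep r parent) x t ∧ ReflTransGen (ParentStep r parent) t a := by
  obtain ⟨x, a, rfl, hxa, hx, ha, hr⟩ := (ofTree_crosses_iff _).1 h
  by_contra hne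
  rcases hG x a hxa with hxa' | hax
  · exact hr (reachable_induce_of_reflTransGen hrank hxa' hx ha
      fun hb => hne ⟨x, a, rfl, hxa, hx, ha, hb⟩)
  · exact hr (reachable_induce_of_reflTransGen hrank hax ha hx
      fun hb => hne ⟨a, x, Sym2.eq_swap, hxa.symm, ha, hx, hb⟩).symm

end TreeCutDecomp

namespace StarSubdiv

open SimpleGraph TreeCutDecomp

variable {k n : ℕ}

abbrev u₀ : Unit ⊕ (Fin n ⊕ (Fin n × Fin k)) := .inl ()

abbrev u (i : Fin n) : Unit ⊕ (Fin n ⊕ (Fin n × Fin k)) := .inr (.inl i)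

abbrev v (i : Fin n) (j : Fin k) : Unit ⊕ (Fin n ⊕ (Fin n × Fin k)) := .inr (.inr (i, j))

lemma starSubdiv_adj {x y : Unit ⊕ (Fin n ⊕ (Fin n × Fin k))} :
    (starSubdiv k n).Adj x y ↔ ∃ i j, s(x, y) = s(u₀, v i j) ∨ s(x, y) = s(u i, v i j) := by
  rcases x with _ | i | ⟨i, j⟩ <;> rcases y with _ | i' | ⟨i', j'⟩ <;>
    simp [starSubdiv, eq_comm]

def parent : Unit ⊕ (Fin n ⊕ (Fin n × Fin 3)) → Unit ⊕ (Fin n ⊕ (Fin n × Fin 3))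
  | .inl _ => u₀
  | .inr (.inl i) => v i 0
  | .inr (.inr (_, 0)) => u₀
  | .inr (.inr (i, 1)) => u i
  | .inr (.inr (i, 2)) => v i 1

def depth : Unit ⊕ (Fin n ⊕ (Fin n × Fin 3)) → ℕ
  | .inl _ => 0
  | .inr (.inl _) => 2
  | .inr (.inr (_, 0)) => 1
  | .inr (.inr (_, 1)) => 3
  | .inr (.inr (_, 2)) => 4

lemma depth_parent_lt (x : Unit ⊕ (Fin n ⊕ (Fin n × Fin 3))) (hx : x ≠ u₀) :
    depth (parent x) < depth x := by
  rcases x with _ | i | ⟨i, j⟩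
  · exact absurd rfl hx
  · simp [parent, depth]
  · fin_cases j <;> simp [parent, depth]

lemma isTree_parentGraph_u₀ :
    (parentGraph (u₀ : Unit ⊕ (Fin n ⊕ (Fin n × Fin 3))) parent).IsTree :=
  isTree_parentGraph depth_parent_lt

lemma starSubdiv_adj_reflTransGen {x a : Unit ⊕ (Fin n ⊕ (Fin n × Fin 3))}
    (h : (starSubdiv 3 n).Adj x a) :
    ReflTransGen (ParentStep u₀ parent) x a ∨ ReflTransGen (ParentStep u₀ parent) a x := by
  obtain ⟨i, j, h | h⟩ := starSubdiv_adj.1 h <;>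
    rcases Sym2.eq_iff.1 h with ⟨rfl, rfl⟩ | ⟨rfl, rfl⟩ <;>
    fin_cases j <;>
    simp [parent, reflTransGen_parentStep_iff_of_ne, reflTransGen_parentStep_root_iff]

def crossingEdges :
    Unit ⊕ (Fin n ⊕ (Fin n × Fin 3)) → Set (Sym2 (Unit ⊕ (Fin n ⊕ (Fin n × Fin 3))))
  | .inr (.inl i) | .inr (.inr (i, 0)) => {s(u₀, v i 1), s(u₀, v i 2)}
  | .inr (.inr (i, 1)) => {s(u₀, v i 2), s(u i, v i 2)}
  | _ => ∅

lemma ncard_crossingEdges_le (t : Unit ⊕ (Fin n ⊕ (Fin n × Fin 3))) :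
    (crossingEdges t).ncard ≤ 2 := by
  unfold crossingEdges
  split <;> simp

lemma mem_crossingEdges {x a t : Unit ⊕ (Fin n ⊕ (Fin n × Fin 3))}
    (hxa : (starSubdiv 3 n).Adj x a) (hx : x ≠ t) (ha : a ≠ t)
    (hxt : ReflTransGen (ParentStep u₀ parent) x t)
    (hta : ReflTransGen (ParentStep u₀ parent) t a) :
    s(x, a) ∈ crossingEdges t := by
  rcases t with _ | i | ⟨i, j⟩ <;> try fin_cases j
  all_goals
    obtain ⟨i', j, h | h⟩ := starSubdiv_adj.1 hxa <;>
      rcases Sym2.eq_iff.1 h with ⟨rfl, rfl⟩ | ⟨rfl, rfl⟩ <;> fin_cases j <;>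
      simp_all [crossingEdges, parent, reflTransGen_parentStep_iff_of_ne,
        reflTransGen_parentStep_root_iff]

lemma crossNum_le_two (t : Unit ⊕ (Fin n ⊕ (Fin n × Fin 3))) :
    (ofTree (starSubdiv 3 n) isTree_parentGraph_u₀).crossNum t ≤ 2 := by
  refine le_trans (Set.ncard_le_ncard (fun e he => ?_) (Set.toFinite _)) (ncard_crossingEdges_le t)
  obtain ⟨x, a, rfl, hxa, hx, ha, hxt, hta⟩ :=
    crosses_ofTree_parentGraph depth_parent_lt (fun _ _ => starSubdiv_adj_reflTransGen) he
  exact mem_crossingEdges hxa hx ha hxt hta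

end StarSubdiv

theorem stmt_9_general (n : ℕ) : ecrwA (starSubdiv 3 n) 1 ≤ 2 :=
  TreeCutDecomp.ecrwA_one_le_of_isTree StarSubdiv.isTree_parentGraph_u₀ StarSubdiv.crossNum_le_two

/-- For every positive integer `n` with `n ≥ 3`, the graph `S_{3,n}` has 1-edge-crossing
width at most 2. -/
theorem stmt_9 (n : ℕ) (hn : 3 ≤ n) : ecrwA (starSubdiv 3 n) 1 ≤ 2 :=
  stmt_9_general n
end

section
/- Let q, t be positive integers and B ⊆ [q] × [t]. For every set P of vectors in ℕ^q there exists a subset P* ⊆ P with |P*| ≤ q!·2^{q(q+1)/2}·t^{q−1}·(t+1) such that for every W ∈ ℕ^t, if some V ∈ P is B-compatible with W, then some V* ∈ P* is B-compatible with W. -/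
/-- `(V, W)` is `B`-compatible: `V i ≠ W j` for every `(i, j) ∈ B`. -/
def BCompatible {q t : ℕ} (B : Set (Fin q × Fin t)) (V : Fin q → ℕ) (W : Fin t → ℕ) : Prop :=
  ∀ p ∈ B, V p.1 ≠ W p.2

/-!
Call a list `(V₁, W₁), …, (V_N, W_N)` a chain if each `(V_k, W_k)` is `B`-compatible while
`(V_m, W_k)` is not for `m < k`. A chain of maximal length with all `V_k ∈ P` gives `P*`:
if some `V ∈ P` were compatible with a `W` that no `V_k` is compatible with, appending `(V, W)`
would give a longer chain.

Chains have length at most `∑_{i ≤ q} (qt)^i`. Drop the last pair `(V_N, W_N)`; every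
other `V_m` meets `W_N` at some `(i, j) ∈ B`, i.e. `V_m i = W_N j`. Within one of the `qt`
classes with fixed `(i, j)`, all `V_m i` coincide, so row `i` can no longer witness
incompatibility inside the class (it would make some `V_k` meet its own `W_k`), and induction
on the number of rows available gives the bound.
-/

open Finset Nat

theorem succ_mul_pow_self_le (n : ℕ) : (n + 1) * n ^ n ≤ n ! * 2 ^ (n * (n + 1) / 2) := by
  induction n with
  | zero => simp
  | succ n ih =>
    have htri : (n + 1) * (n + 1 + 1) / 2 = n * (n + 1) / 2 + (n + 1) := by
      rw [show (n + 1) * (n + 1 + 1) = n * (n + 1) + 2 * (n + 1) by ring,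
        Nat.add_mul_div_left _ _ two_pos]
    have hpow : (n + 1) ^ n ≤ 2 ^ n * n ^ n := by
      rcases n.eq_zero_or_pos with rfl | hn
      · simp
      · rw [← mul_pow]; exact Nat.pow_le_pow_left (by omega) n
    calc (n + 1 + 1) * (n + 1) ^ (n + 1) = (n + 1) * ((n + 2) * (n + 1) ^ n) := by ring
      _ ≤ (n + 1) * (2 * (n + 1) * (2 ^ n * n ^ n)) := by gcongr; omega
      _ = (n + 1) * 2 ^ (n + 1) * ((n + 1) * n ^ n) := by ring
      _ ≤ (n + 1) * 2 ^ (n + 1) * (n ! * 2 ^ (n * (n + 1) / 2)) := by gcongr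
      _ = (n + 1)! * 2 ^ ((n + 1) * (n + 1 + 1) / 2) := by
        rw [htri, Nat.factorial_succ, pow_add]; ring

theorem geom_sum_le_succ_mul_pow {c : ℕ} (hc : 1 ≤ c) (n : ℕ) :
    ∑ i ∈ range (n + 1), c ^ i ≤ (n + 1) * c ^ n := by
  simpa using sum_le_card_nsmul (range (n + 1)) (c ^ ·) (c ^ n) fun i hi =>
    Nat.pow_le_pow_right hc (Nat.lt_succ_iff.mp (mem_range.mp hi))

theorem geom_sum_le_factorial_mul_two_pow {q t : ℕ} (hq : 0 < q) (ht : 0 < t) :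
    ∑ i ∈ range (q + 1), (q * t) ^ i ≤ q ! * 2 ^ (q * (q + 1) / 2) * t ^ (q - 1) * (t + 1) :=
  calc ∑ i ∈ range (q + 1), (q * t) ^ i ≤ (q + 1) * q ^ q * (t ^ (q - 1) * t) := by
        rw [pow_sub_one_mul hq.ne', mul_assoc, ← mul_pow]
        exact geom_sum_le_succ_mul_pow (Nat.mul_pos hq ht) q
    _ ≤ q ! * 2 ^ (q * (q + 1) / 2) * (t ^ (q - 1) * (t + 1)) := by
        gcongr ?_ * (_ * ?_)
        · exact succ_mul_pow_self_le q
        · omega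
    _ = q ! * 2 ^ (q * (q + 1) / 2) * t ^ (q - 1) * (t + 1) := by ring

section Compatibility

variable {q t : ℕ} {B B' : Set (Fin q × Fin t)} {V : Fin q → ℕ} {W : Fin t → ℕ}

theorem BCompatible.mono (h : B' ⊆ B) (hc : BCompatible B V W) : BCompatible B' V W :=
  fun p hp => hc p (h hp)

theorem not_bCompatible_iff : ¬ BCompatible B V W ↔ ∃ p ∈ B, V p.1 = W p.2 := by
  simp [BCompatible]

end Compatibility

theorem card_le_geom_sum_of_not_bCompatible {q t : ℕ} {ι : Type*} [LinearOrder ι]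
    (V : ι → Fin q → ℕ) (W : ι → Fin t → ℕ) (A : Finset (Fin q)) (B : Set (Fin q × Fin t))
    (hB : ∀ p ∈ B, p.1 ∈ A) (S : Finset ι) (hcompat : ∀ k ∈ S, BCompatible B (V k) (W k))
    (hincompat : ∀ m ∈ S, ∀ k ∈ S, m < k → ¬ BCompatible B (V m) (W k)) :
    #S ≤ ∑ i ∈ range (#A + 1), (q * t) ^ i := by
  induction A using Finset.strongInduction generalizing B S with
  | H A ih =>
  rcases S.eq_empty_or_nonempty with rfl | hS
  · simp
  set k₀ := S.max' hS
  set fiber : Fin q × Fin t → Finset ι := fun p => (S.erase k₀).filter (V · p.1 = W k₀ p.2)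
  have hcover : S.erase k₀ ⊆ (A ×ˢ univ).biUnion fiber := by
    intro m hm
    obtain ⟨hmk, hmS⟩ := mem_erase.mp hm
    obtain ⟨p, hpB, hp⟩ := not_bCompatible_iff.mp
      (hincompat m hmS k₀ (S.max'_mem hS) (lt_of_le_of_ne (S.le_max' m hmS) hmk))
    exact mem_biUnion.mpr ⟨p, mem_product.mpr ⟨hB p hpB, mem_univ _⟩, mem_filter.mpr ⟨hm, hp⟩⟩
  have hfiber : ∀ p ∈ A ×ˢ univ, #(fiber p) ≤ ∑ i ∈ range #A, (q * t) ^ i := by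
    intro p hp
    have hpA : p.1 ∈ A := (mem_product.mp hp).1
    have hfS : fiber p ⊆ S := (filter_subset _ _).trans (erase_subset _ _)
    rw [← card_erase_add_one hpA]
    refine ih _ (erase_ssubset hpA) {p' ∈ B | p'.1 ≠ p.1} ?_ _
      (fun k hk => (hcompat k (hfS hk)).mono fun _ h => h.1) ?_
    · rintro p' ⟨hp'B, hp'⟩
      exact mem_erase.mpr ⟨hp', hB p' hp'B⟩
    · intro m hm k hk hmk
      obtain ⟨p', hp'B, hp'⟩ := not_bCompatible_iff.mp (hincompat m (hfS hm) k (hfS hk) hmk)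
      refine not_bCompatible_iff.mpr ⟨p', ⟨hp'B, fun hrow => hcompat k (hfS hk) p' hp'B ?_⟩, hp'⟩
      -- `V m` and `V k` agree at row `p.1`, both being equal to `W k₀ p.2`.
      rw [hrow, (mem_filter.mp hk).2, ← (mem_filter.mp hm).2, ← hrow, hp']
  calc #S = #(S.erase k₀) + 1 := (card_erase_add_one (S.max'_mem hS)).symm
    _ ≤ ∑ p ∈ A ×ˢ univ, #(fiber p) + 1 := by
        gcongr; exact (card_le_card hcover).trans card_biUnion_le
    _ ≤ #(A ×ˢ (univ : Finset (Fin t))) * ∑ i ∈ range #A, (q * t) ^ i + 1 := by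
        gcongr; exact sum_le_card_nsmul _ _ _ hfiber
    _ ≤ q * t * ∑ i ∈ range #A, (q * t) ^ i + 1 := by
        rw [card_product, Finset.card_fin]
        gcongr
        simpa using card_le_univ A
    _ = ∑ i ∈ range (#A + 1), (q * t) ^ i := geom_sum_succ.symm

def IsCompatChain {q t : ℕ} (B : Set (Fin q × Fin t)) (L : List ((Fin q → ℕ) × (Fin t → ℕ))) :
    Prop :=
  (∀ x ∈ L, BCompatible B x.1 x.2) ∧ L.Pairwise fun x y => ¬ BCompatible B x.1 y.2

namespace IsCompatChain

variable {q t : ℕ} {B : Set (Fin q × Fin t)} {L : List ((Fin q → ℕ) × (Fin t → ℕ))}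

theorem length_le (h : IsCompatChain B L) : L.length ≤ ∑ i ∈ range (q + 1), (q * t) ^ i := by
  simpa using card_le_geom_sum_of_not_bCompatible (fun k => (L.get k).1) (fun k => (L.get k).2)
    univ B (fun _ _ => mem_univ _) univ (fun k _ => h.1 _ (L.get_mem k))
    (fun m _ k _ hmk => List.pairwise_iff_get.mp h.2 m k hmk)

theorem append_singleton (h : IsCompatChain B L) {x : (Fin q → ℕ) × (Fin t → ℕ)}
    (hx : BCompatible B x.1 x.2) (hLx : ∀ y ∈ L, ¬ BCompatible B y.1 x.2) :
    IsCompatChain B (L ++ [x]) := by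
  refine ⟨fun y hy => ?_, List.pairwise_append.mpr ⟨h.2, by simp, fun y hy z hz => ?_⟩⟩
  · rcases List.mem_append.mp hy with hy | hy
    · exact h.1 y hy
    · rwa [List.mem_singleton.mp hy]
  · rw [List.mem_singleton.mp hz]
    exact hLx y hy

end IsCompatChain

theorem exists_maximal_isCompatChain {q t : ℕ} (B : Set (Fin q × Fin t))
    (P : Set (Fin q → ℕ)) :
    ∃ L, IsCompatChain B L ∧ (∀ x ∈ L, x.1 ∈ P) ∧
      ∀ L', IsCompatChain B L' → (∀ x ∈ L', x.1 ∈ P) → L'.length ≤ L.length := by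
  set lengths : Set ℕ :=
    {n | ∃ L, IsCompatChain B L ∧ (∀ x ∈ L, x.1 ∈ P) ∧ L.length = n}
  have hne : lengths.Nonempty := ⟨0, [], ⟨by simp, by simp⟩, by simp, rfl⟩
  have hbdd : BddAbove lengths := ⟨_, by rintro _ ⟨L, hL, -, rfl⟩; exact hL.length_le⟩
  obtain ⟨L, hL, hLP, hlen⟩ := Nat.sSup_mem hne hbdd
  exact ⟨L, hL, hLP, fun L' hL' hL'P => hlen ▸ le_csSup hbdd ⟨L', hL', hL'P, rfl⟩⟩

/-- For positive integers `q`, `t`, any `B ⊆ [q] × [t]` and any set `P` of vectors in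
`ℕ^q`, there is a subset `P* ⊆ P` of size at most `q!·2^{q(q+1)/2}·t^{q−1}·(t+1)` such
that whenever some `V ∈ P` is `B`-compatible with a vector `W ∈ ℕ^t`, some `V* ∈ P*`
is `B`-compatible with `W`. -/
theorem stmt_13 (q t : ℕ) (hq : 0 < q) (ht : 0 < t) (B : Set (Fin q × Fin t))
    (P : Set (Fin q → ℕ)) :
    ∃ Pstar ⊆ P, Pstar.Finite ∧
      Pstar.ncard ≤ Nat.factorial q * 2 ^ (q * (q + 1) / 2) * t ^ (q - 1) * (t + 1) ∧
      ∀ W : Fin t → ℕ, (∃ V ∈ P, BCompatible B V W) → ∃ Vstar ∈ Pstar, BCompatible B Vstar W := by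
  obtain ⟨L, hL, hLP, hmax⟩ := exists_maximal_isCompatChain B P
  refine ⟨(L.map Prod.fst).toFinset, ?_, finite_toSet _, ?_, ?_⟩
  · intro V hV
    obtain ⟨W, hVW⟩ := by simpa using hV
    exact hLP _ hVW
  · rw [Set.ncard_coe_finset]
    refine (List.toFinset_card_le _).trans ?_
    rw [List.length_map]
    exact hL.length_le.trans (geom_sum_le_factorial_mul_two_pow hq ht)
  · rintro W ⟨V, hVP, hVW⟩
    by_contra! hnone
    have hext := hmax _ (hL.append_singleton (x := (V, W)) hVW
      fun y hy => hnone y.1 (by simpa using ⟨y.2, hy⟩))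
      (by simpa [or_imp, forall_and] using ⟨fun a b h => hLP (a, b) h, hVP⟩)
    simp at hext
end

section
/- Let G be a graph with disjoint vertex sets S and T such that at most q vertices of S have a neighbor in T and at most t vertices of T have a neighbor in S. For every set F of proper colorings of G[S] there is a subset F* ⊆ F with |F*| ≤ q!·2^{q(q+1)/2}·t^{q−1}·(t+1) such that for every proper coloring h of G[T], if some g ∈ F is compatible with h, then some g* ∈ F* is compatible with h. -/
universe u

/-- `g` is a proper coloring of the subgraph of `G` induced by `S`. -/
def ProperOn {V : Type u} (G : SimpleGraph V) (S : Set V) (g : V → ℕ) : Prop :=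
  ∀ u ∈ S, ∀ v ∈ S, G.Adj u v → g u ≠ g v

/-- `(S, g)` is compatible with `(T, h)`: for every edge of `G` between `S` and `T`,
the two colorings disagree on its endpoints. -/
def ColCompatible {V : Type u} (G : SimpleGraph V) (S T : Set V) (g h : V → ℕ) : Prop :=
  ∀ u ∈ S, ∀ v ∈ T, G.Adj u v → g u ≠ h v

/-!
Compatibility with `h` only constrains `g` on the at most `q` vertices of `S` with a neighbour
in `T`, where it says that `g v` avoids the list `L v` of at most `t` colours that `h` uses on
the neighbours of `v` in `T`. So it suffices to find, for a family `F` of tuples indexed by a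
set `B` of `n` coordinates, a small subfamily that contains a tuple avoiding `L` whenever `F`
does, for every list assignment `L` with lists of size at most `t`. Call `M ⊆ F` scattered if
its members pairwise differ in every coordinate. A list assignment hits at most `t` members of
a scattered family in each coordinate, so a scattered family of size `n t + 1` is already such a
subfamily. Otherwise a maximal scattered family `M` has at most `n t` members and every `g ∈ F`
agrees with some `m ∈ M` in some coordinate `i`; fixing that agreement and recursing on the
remaining `n - 1` coordinates gives the subfamily, and the bound follows by induction on `n`.
-/

/-- The first branch bounds a scattered family of size `(n + 1) t + 1`, the second a union of
one recursive subfamily per pair in `M × B`, for a maximal scattered family `M`. -/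
def subfamilyBound (t : ℕ) : ℕ → ℕ
  | 0 => 1
  | n + 1 => max ((n + 1) * t + 1) ((n + 1) * t * ((n + 1) * subfamilyBound t n))

lemma subfamilyBound_mono {t : ℕ} (ht : 0 < t) : Monotone (subfamilyBound t) :=
  monotone_nat_of_le_succ fun n => le_max_of_le_right <|
    calc subfamilyBound t n ≤ (n + 1) * subfamilyBound t n := Nat.le_mul_of_pos_left _ n.succ_pos
      _ ≤ (n + 1) * t * ((n + 1) * subfamilyBound t n) := Nat.le_mul_of_pos_left _ (by positivity)

section Avoiding

variable {ι α : Type*}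

def AvoidsOn (B : Finset ι) (L : ι → Finset α) (g : ι → α) : Prop :=
  ∀ i ∈ B, g i ∉ L i

lemma AvoidsOn.of_erase [DecidableEq ι] {B : Finset ι} {L : ι → Finset α} {g : ι → α} {i : ι}
    (hg : AvoidsOn (B.erase i) L g) (hi : g i ∉ L i) : AvoidsOn B L g := fun j hj => by
  obtain rfl | hji := eq_or_ne j i
  · exact hi
  · exact hg j (Finset.mem_erase.2 ⟨hji, hj⟩)

def IsScattered (B : Finset ι) (M : Set (ι → α)) : Prop :=
  M.Pairwise fun g g' => ∀ i ∈ B, g i ≠ g' i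

lemma IsScattered.exists_avoidsOn {B : Finset ι} {M : Finset (ι → α)}
    (hM : IsScattered B (M : Set (ι → α))) {L : ι → Finset α} {t : ℕ}
    (hL : ∀ i ∈ B, (L i).card ≤ t) (hcard : B.card * t < M.card) :
    ∃ g ∈ M, AvoidsOn B L g := by
  classical
  have hhit : ∀ i ∈ B, (M.filter fun g => g i ∈ L i).card ≤ t := fun i hi =>
    (Finset.card_le_card_of_injOn (· i) (fun g hg => (Finset.mem_filter.1 hg).2)
      (fun g hg g' hg' hgg' => by_contra fun hne =>
        hM (Finset.mem_filter.1 hg).1 (Finset.mem_filter.1 hg').1 hne i hi hgg')).trans (hL i hi)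
  by_contra! hall
  have hcover : M ⊆ B.biUnion fun i => M.filter fun g => g i ∈ L i := fun g hg => by
    obtain ⟨i, hi, hgi⟩ : ∃ i ∈ B, g i ∈ L i := by simpa [AvoidsOn] using hall g hg
    exact Finset.mem_biUnion.2 ⟨i, hi, Finset.mem_filter.2 ⟨hg, hgi⟩⟩
  have := (Finset.card_le_card hcover).trans (Finset.card_biUnion_le.trans (Finset.sum_le_sum hhit))
  rw [Finset.sum_const, smul_eq_mul] at this
  omega

lemma exists_isScattered_card_eq_or_covers {B : Finset ι} (hB : B.Nonempty) (F : Set (ι → α))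
    (N : ℕ) : ∃ M : Finset (ι → α), ↑M ⊆ F ∧ IsScattered B (M : Set (ι → α)) ∧
      (M.card = N ∨ M.card < N ∧ ∀ g ∈ F, ∃ m ∈ M, ∃ i ∈ B, g i = m i) := by
  classical
  induction N with
  | zero => exact ⟨∅, by simp, by simp [IsScattered], Or.inl rfl⟩
  | succ N ih =>
    obtain ⟨M, hMF, hM, hcard | ⟨hcard, hcov⟩⟩ := ih
    · by_cases hcov : ∀ g ∈ F, ∃ m ∈ M, ∃ i ∈ B, g i = m i
      · exact ⟨M, hMF, hM, Or.inr ⟨by omega, hcov⟩⟩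
      push Not at hcov
      obtain ⟨g, hgF, hg⟩ := hcov
      have hgM : g ∉ M := fun hgM => by
        obtain ⟨i, hi⟩ := hB
        exact hg g hgM i hi rfl
      refine ⟨insert g M, ?_, ?_, Or.inl ?_⟩
      · rw [Finset.coe_insert]
        exact Set.insert_subset hgF hMF
      · rw [Finset.coe_insert]
        exact hM.insert fun m hm _ => ⟨hg m hm, fun i hi => (hg m hm i hi).symm⟩
      · rw [Finset.card_insert_of_notMem hgM, hcard]
    · exact ⟨M, hMF, hM, Or.inr ⟨by omega, hcov⟩⟩

lemma exists_finset_subfamily_avoidsOn (t n : ℕ) (B : Finset ι) (hB : B.card = n)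
    (F : Set (ι → α)) : ∃ Fstar : Finset (ι → α), ↑Fstar ⊆ F ∧ Fstar.card ≤ subfamilyBound t n ∧
      ∀ L : ι → Finset α, (∀ i ∈ B, (L i).card ≤ t) →
        (∃ g ∈ F, AvoidsOn B L g) → ∃ g ∈ Fstar, AvoidsOn B L g := by
  classical
  induction n generalizing B F with
  | zero =>
    obtain rfl := Finset.card_eq_zero.1 hB
    obtain rfl | ⟨g, hg⟩ := F.eq_empty_or_nonempty
    · exact ⟨∅, by simp, by simp, fun _ _ ⟨_, hg, _⟩ => absurd hg (Set.notMem_empty _)⟩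
    · exact ⟨{g}, by simpa, by simp [subfamilyBound],
        fun _ _ _ => ⟨g, by simp, by simp [AvoidsOn]⟩⟩
  | succ n ih =>
    have hBne : B.Nonempty := Finset.card_pos.1 (by omega)
    obtain ⟨M, hMF, hM, hcard | ⟨hcard, hcov⟩⟩ :=
      exists_isScattered_card_eq_or_covers hBne F ((n + 1) * t + 1)
    · refine ⟨M, hMF, hcard ▸ le_max_left _ _, fun L hL _ => ?_⟩
      exact hM.exists_avoidsOn hL (by rw [hB, hcard]; omega)
    have hsub : ∀ p ∈ M ×ˢ B, ∃ Fs : Finset (ι → α), ↑Fs ⊆ {g ∈ F | g p.2 = p.1 p.2} ∧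
        Fs.card ≤ subfamilyBound t n ∧ ∀ L : ι → Finset α, (∀ i ∈ B.erase p.2, (L i).card ≤ t) →
          (∃ g ∈ {g ∈ F | g p.2 = p.1 p.2}, AvoidsOn (B.erase p.2) L g) →
            ∃ g ∈ Fs, AvoidsOn (B.erase p.2) L g := fun p hp =>
      ih _ (by rw [Finset.card_erase_of_mem (Finset.mem_product.1 hp).2, hB, Nat.add_sub_cancel]) _
    choose! Fs hFsF hFscard hFs using hsub
    refine ⟨(M ×ˢ B).biUnion Fs, ?_, ?_, ?_⟩
    · intro g hg
      obtain ⟨p, hp, hgp⟩ := Finset.mem_biUnion.1 hg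
      exact (hFsF p hp hgp).1
    · calc ((M ×ˢ B).biUnion Fs).card ≤ ∑ p ∈ M ×ˢ B, (Fs p).card := Finset.card_biUnion_le
        _ ≤ ∑ _p ∈ M ×ˢ B, subfamilyBound t n := Finset.sum_le_sum hFscard
        _ = M.card * ((n + 1) * subfamilyBound t n) := by
          rw [Finset.sum_const, Finset.card_product, hB, smul_eq_mul, mul_assoc]
        _ ≤ (n + 1) * t * ((n + 1) * subfamilyBound t n) := by gcongr; omega
        _ ≤ subfamilyBound t (n + 1) := le_max_right _ _
    · rintro L hL ⟨g, hgF, hg⟩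
      obtain ⟨m, hm, i, hi, hgi⟩ := hcov g hgF
      have hp : (m, i) ∈ M ×ˢ B := Finset.mem_product.2 ⟨hm, hi⟩
      obtain ⟨gs, hgs, hgsL⟩ := hFs (m, i) hp L (fun j hj => hL j (Finset.mem_of_mem_erase hj))
        ⟨g, ⟨hgF, hgi⟩, fun j hj => hg j (Finset.mem_of_mem_erase hj)⟩
      have hgsi : gs i = g i := ((hFsF _ hp hgs).2).trans hgi.symm
      exact ⟨gs, Finset.mem_biUnion.2 ⟨_, hp, hgs⟩, hgsL.of_erase (hgsi ▸ hg i hi)⟩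

end Avoiding

lemma two_pow_triangle_succ (n : ℕ) :
    2 ^ ((n + 1) * (n + 2) / 2) = 2 ^ (n + 1) * 2 ^ (n * (n + 1) / 2) := by
  rw [← pow_add]
  congr 1
  rw [show (n + 1) * (n + 2) = n * (n + 1) + (n + 1) * 2 by ring,
    Nat.add_mul_div_right _ _ two_pos, add_comm]

lemma subfamilyBound_le {t : ℕ} (ht : 0 < t) (n : ℕ) :
    subfamilyBound t n ≤ n.factorial * 2 ^ (n * (n + 1) / 2) * t ^ (n - 1) * (t + 1) := by
  induction n with
  | zero => simp [subfamilyBound]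
  | succ n ih =>
    rw [subfamilyBound, Nat.add_sub_cancel, two_pow_triangle_succ]
    refine max_le ?_ ?_
    · calc (n + 1) * t + 1 ≤ (n + 1) * (t + 1) := by nlinarith
        _ ≤ (n + 1).factorial * (2 ^ (n + 1) * 2 ^ (n * (n + 1) / 2)) * t ^ n * (t + 1) := by
          gcongr
          rw [mul_assoc]
          exact (Nat.self_le_factorial _).trans (Nat.le_mul_of_pos_right _ (by positivity))
    obtain _ | m := n
    · simp [subfamilyBound]
      omega
    calc (m + 2) * t * ((m + 2) * subfamilyBound t (m + 1))
        ≤ (m + 2) * t * ((m + 2) *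
            ((m + 1).factorial * 2 ^ ((m + 1) * (m + 2) / 2) * t ^ m * (t + 1))) := by
          rw [Nat.add_sub_cancel] at ih
          gcongr
      _ = (m + 2).factorial * ((m + 2) * 2 ^ ((m + 1) * (m + 2) / 2)) * t ^ (m + 1) *
          (t + 1) := by
          rw [Nat.factorial_succ (m + 1)]
          ring
      _ ≤ (m + 2).factorial * (2 ^ (m + 2) * 2 ^ ((m + 1) * (m + 2) / 2)) * t ^ (m + 1) *
          (t + 1) := by
          gcongr
          exact (Nat.lt_two_pow_self).le

section Graph

variable {V : Type u} (G : SimpleGraph V)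

def boundary (S T : Set V) : Set V := {v | v ∈ S ∧ ∃ u ∈ T, G.Adj v u}

open Classical in
noncomputable def neighborColors [Fintype V] (T : Set V) (h : V → ℕ) (v : V) : Finset ℕ :=
  (Finset.univ.filter fun u => u ∈ T ∧ G.Adj v u).image h

variable [Fintype V]

lemma mem_neighborColors {T : Set V} {h : V → ℕ} {v : V} {c : ℕ} :
    c ∈ neighborColors G T h v ↔ ∃ u ∈ T, G.Adj v u ∧ h u = c := by
  simp [neighborColors, and_assoc]

lemma card_neighborColors_le {S T : Set V} {t : ℕ} (hTt : (boundary G T S).ncard ≤ t)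
    (h : V → ℕ) {v : V} (hv : v ∈ S) : (neighborColors G T h v).card ≤ t := by
  classical
  calc (neighborColors G T h v).card ≤ (Finset.univ.filter fun u => u ∈ T ∧ G.Adj v u).card :=
        Finset.card_image_le
    _ = ((Finset.univ.filter fun u => u ∈ T ∧ G.Adj v u : Finset V) : Set V).ncard :=
        (Set.ncard_coe_finset _).symm
    _ ≤ (boundary G T S).ncard := Set.ncard_le_ncard (fun u hu => by
        simp only [Finset.coe_filter, Finset.mem_univ, true_and, Set.mem_ofPred_eq] at hu
        exact ⟨hu.1, v, hv, hu.2.symm⟩)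
    _ ≤ t := hTt

lemma colCompatible_iff_avoidsOn {S T : Set V} {B : Finset V}
    (hB : ∀ v, v ∈ B ↔ v ∈ boundary G S T) (g h : V → ℕ) :
    ColCompatible G S T g h ↔ AvoidsOn B (neighborColors G T h) g := by
  simp only [ColCompatible, AvoidsOn, hB, boundary, Set.mem_ofPred_eq, mem_neighborColors]
  constructor
  · rintro hgh v ⟨hv, -⟩ ⟨u, hu, hvu, hc⟩
    exact hgh v hv u hu hvu hc.symm
  · intro hgh v hv u hu hvu hc
    exact hgh v ⟨hv, u, hu, hvu⟩ ⟨u, hu, hvu, hc.symm⟩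

end Graph

theorem stmt_14_general {V : Type u} [Fintype V] (G : SimpleGraph V) (S T : Set V)
    (q t : ℕ) (ht : 0 < t)
    (hSq : {v | v ∈ S ∧ ∃ u ∈ T, G.Adj v u}.ncard ≤ q)
    (hTt : {v | v ∈ T ∧ ∃ u ∈ S, G.Adj v u}.ncard ≤ t)
    (F : Set (V → ℕ)) :
    ∃ Fstar ⊆ F, Fstar.Finite ∧
      Fstar.ncard ≤ Nat.factorial q * 2 ^ (q * (q + 1) / 2) * t ^ (q - 1) * (t + 1) ∧
      ∀ h : V → ℕ, ProperOn G T h → (∃ g ∈ F, ColCompatible G S T g h) →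
        ∃ gstar ∈ Fstar, ColCompatible G S T gstar h := by
  set B := (Set.toFinite (boundary G S T)).toFinset
  have hB : ∀ v, v ∈ B ↔ v ∈ boundary G S T := fun _ => Set.Finite.mem_toFinset _
  have hBq : B.card ≤ q := by rwa [← Set.ncard_coe_finset, Set.Finite.coe_toFinset]
  obtain ⟨Fstar, hFstarF, hcard, hFstar⟩ := exists_finset_subfamily_avoidsOn t B.card B rfl F
  refine ⟨Fstar, hFstarF, Fstar.finite_toSet, ?_, ?_⟩
  · rw [Set.ncard_coe_finset]
    exact hcard.trans ((subfamilyBound_mono ht hBq).trans (subfamilyBound_le ht q))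
  · rintro h - ⟨g, hgF, hg⟩
    have hL : ∀ v ∈ B, (neighborColors G T h v).card ≤ t := fun v hv =>
      card_neighborColors_le G hTt h ((hB v).1 hv).1
    obtain ⟨gs, hgs, hgsL⟩ := hFstar _ hL ⟨g, hgF, (colCompatible_iff_avoidsOn G hB g h).1 hg⟩
    exact ⟨gs, hgs, (colCompatible_iff_avoidsOn G hB gs h).2 hgsL⟩

/-- Let `S`, `T` be disjoint vertex sets of `G` with at most `q` vertices of `S` having
a neighbour in `T` and at most `t` vertices of `T` having a neighbour in `S`. For every
set `F` of proper colorings of `G[S]` there is `F* ⊆ F` with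
`|F*| ≤ q!·2^{q(q+1)/2}·t^{q−1}·(t+1)` such that any proper coloring of `G[T]`
compatible with some member of `F` is compatible with some member of `F*`. -/
theorem stmt_14 {V : Type u} [Fintype V] (G : SimpleGraph V) (S T : Set V)
    (hST : Disjoint S T) (q t : ℕ) (hq : 0 < q) (ht : 0 < t)
    (hSq : {v | v ∈ S ∧ ∃ u ∈ T, G.Adj v u}.ncard ≤ q)
    (hTt : {v | v ∈ T ∧ ∃ u ∈ S, G.Adj v u}.ncard ≤ t)
    (F : Set (V → ℕ)) (hF : ∀ g ∈ F, ProperOn G S g) :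
    ∃ Fstar ⊆ F, Fstar.Finite ∧
      Fstar.ncard ≤ Nat.factorial q * 2 ^ (q * (q + 1) / 2) * t ^ (q - 1) * (t + 1) ∧
      ∀ h : V → ℕ, ProperOn G T h → (∃ g ∈ F, ColCompatible G S T g h) →
        ∃ gstar ∈ Fstar, ColCompatible G S T gstar h :=
  stmt_14_general G S T q t ht hSq hTt F
end
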